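/- For α < 1/2, the explosion coefficient f_n = a_n^2 / v_n satisfies n · f_n → 1 − 2α as n → ∞; in particular f_n → 0. -/

import Mathlib

/-!
The recurrence `a (n + 1) * (n + α) = a n * n` gives
`(n + 1) a_{n+1}² - n a_n² = (1 - 2α - α²/n) a_{n+1}²`, so the increments of `n a_n²` are
`1 - 2α + o(1)` times those of `v_n`. For `α < 1/2` this makes `n a_n²` eventually increasing,
hence `a_n² ≥ c/n` and `v_n → ∞`, and Stolz–Cesàro yields `n a_n² / v_n → 1 - 2α`.
-/

open Filter Topology Asymptotics Finset

/-- Stolz–Cesàro. -/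
theorem Asymptotics.IsLittleO.of_succ_sub {E : Type*} [NormedAddCommGroup E] {u : ℕ → E}
    {w : ℕ → ℝ} (h : (fun n => u (n + 1) - u n) =o[atTop] fun n => w (n + 1) - w n)
    (hw : Monotone w) (hw_top : Tendsto w atTop atTop) : u =o[atTop] w := by
  have hw_norm : Tendsto (norm ∘ w) atTop atTop := tendsto_norm_atTop_atTop.comp hw_top
  have hw_sub_top : Tendsto (fun n => w n - w 0) atTop atTop := by
    simpa only [sub_eq_add_neg] using tendsto_atTop_add_const_right _ (-w 0) hw_top
  have hsum := h.sum_range (fun n => sub_nonneg.2 (hw n.le_succ)) <| by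
    simpa only [sum_range_sub] using hw_sub_top
  simp only [sum_range_sub] at hsum
  have hw_sub : (fun n => w n - w 0) =O[atTop] w :=
    (isBigO_refl w atTop).sub (isLittleO_const_left.2 (.inr hw_norm)).isBigO
  simpa using (hsum.trans_isBigO hw_sub).add (isLittleO_const_left (c := u 0).2 (.inr hw_norm))

theorem sum_Icc_one_eq_sum_range {M : Type*} [AddCommMonoid M] (f : ℕ → M) (n : ℕ) :
    ∑ k ∈ Icc 1 n, f k = ∑ i ∈ range n, f (i + 1) := by
  rw [range_eq_Ico, sum_Ico_add', zero_add, Ico_add_one_right_eq_Icc]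

theorem tendsto_sum_Icc_one_atTop_of_not_summable {f : ℕ → ℝ} (hf : ∀ n, 0 ≤ f n)
    (h : ¬Summable f) : Tendsto (fun n => ∑ k ∈ Icc 1 n, f k) atTop atTop := by
  simp only [sum_Icc_one_eq_sum_range]
  exact (not_summable_iff_tendsto_nat_atTop_of_nonneg fun n => hf (n + 1)).1
    ((summable_nat_add_iff 1).not.2 h)

theorem Real.Gamma_add_one_div_Gamma_add_add_one_mul {x y : ℝ} (hx : x ≠ 0) (hxy : x + y ≠ 0) :
    Gamma (x + 1) / Gamma (x + y + 1) * (x + y) = Gamma x / Gamma (x + y) * x := by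
  rw [Gamma_add_one hx, Gamma_add_one hxy]
  field_simp

namespace GammaRatioSeq

variable {α : ℝ} {a : ℕ → ℝ} {n : ℕ}

theorem succ_mul_sq_sub_mul_sq (hrec : a (n + 1) * (n + α) = a n * n) (hn : n ≠ 0) :
    (n + 1) * a (n + 1) ^ 2 - n * a n ^ 2 = (1 - 2 * α - α ^ 2 / n) * a (n + 1) ^ 2 := by
  have hn' : (n : ℝ) ≠ 0 := Nat.cast_ne_zero.2 hn
  rw [show a n = a (n + 1) * (n + α) / n by rw [hrec]; field_simp]
  field_simp
  ring

theorem eventually_mul_sq_le_succ_mul_sq (hα : α < 1 / 2)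
    (hrec : ∀ᶠ n in atTop, a (n + 1) * (n + α) = a n * n) :
    ∀ᶠ n : ℕ in atTop, n * a n ^ 2 ≤ (n + 1) * a (n + 1) ^ 2 := by
  have hsmall := (tendsto_const_div_atTop_nhds_zero_nat (α ^ 2)).eventually_lt_const
    (show (0 : ℝ) < 1 - 2 * α by linarith)
  filter_upwards [hrec, hsmall, eventually_ne_atTop 0] with n hn hn_small hn0
  have := succ_mul_sq_sub_mul_sq hn hn0
  nlinarith [sq_nonneg (a (n + 1))]

theorem not_summable_sq (hα : α < 1 / 2)
    (hrec : ∀ᶠ n in atTop, a (n + 1) * (n + α) = a n * n) (ha : ∀ᶠ n in atTop, a n ≠ 0) :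
    ¬Summable fun n => a n ^ 2 := by
  obtain ⟨N, hN⟩ := ((eventually_mul_sq_le_succ_mul_sq hα hrec).and
    (ha.and (eventually_ne_atTop 0))).exists_forall_of_atTop
  obtain ⟨-, haN, hN0⟩ := hN N le_rfl
  set c := (N : ℝ) * a N ^ 2
  have hc : 0 < c := by
    have : (0 : ℝ) < N := by exact_mod_cast Nat.pos_of_ne_zero hN0
    positivity
  have hlow : ∀ n ≥ N, c ≤ n * a n ^ 2 := fun n hn =>
    Nat.le_induction le_rfl (fun m hm ih => by push_cast; exact ih.trans (hN m hm).1) n hn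
  intro hsum
  refine Real.not_summable_natCast_inv ((hsum.mul_left c⁻¹).of_norm_bounded_eventually_nat ?_)
  filter_upwards [eventually_ge_atTop N] with n hn
  have hn0 : (0 : ℝ) < n := by exact_mod_cast (Nat.pos_of_ne_zero hN0).trans_le hn
  rw [Real.norm_of_nonneg (inv_nonneg.2 hn0.le), inv_mul_eq_div, le_div_iff₀ hc,
    inv_mul_le_iff₀ hn0]
  exact hlow n hn

theorem tendsto_mul_sq_div_sum_sq (hα : α < 1 / 2)
    (hrec : ∀ᶠ n in atTop, a (n + 1) * (n + α) = a n * n) (ha : ∀ᶠ n in atTop, a n ≠ 0) :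
    Tendsto (fun n : ℕ => n * a n ^ 2 / ∑ k ∈ Icc 1 n, a k ^ 2) atTop (𝓝 (1 - 2 * α)) := by
  set v := fun n => ∑ k ∈ Icc 1 n, a k ^ 2
  have hv_succ (n : ℕ) : v (n + 1) - v n = a (n + 1) ^ 2 := by
    simp [v, sum_Icc_succ_top]
  have hv_mono : Monotone v := monotone_nat_of_le_succ fun n => by
    linarith [hv_succ n, sq_nonneg (a (n + 1))]
  have hv_top : Tendsto v atTop atTop :=
    tendsto_sum_Icc_one_atTop_of_not_summable (fun n => sq_nonneg _) (not_summable_sq hα hrec ha)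
  have herr : (fun n : ℕ => n * a n ^ 2 - (1 - 2 * α) * v n) =o[atTop] v := by
    refine IsLittleO.of_succ_sub ?_ hv_mono hv_top
    have : (fun n : ℕ => -α ^ 2 / n * (v (n + 1) - v n)) =o[atTop] fun n => v (n + 1) - v n := by
      simpa using ((isLittleO_one_iff ℝ).2
        (tendsto_const_div_atTop_nhds_zero_nat (-α ^ 2))).mul_isBigO
        (isBigO_refl (fun n => v (n + 1) - v n) atTop)
    refine this.congr' ?_ EventuallyEq.rfl
    filter_upwards [hrec, eventually_ne_atTop 0] with n hn hn0
    push_cast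
    linear_combination (1 - 2 * α - α ^ 2 / n) * hv_succ n - succ_mul_sq_sub_mul_sq hn hn0
  show Tendsto (fun n : ℕ => n * a n ^ 2 / v n) atTop _
  have := herr.tendsto_div_nhds_zero.const_add (1 - 2 * α)
  rw [add_zero] at this
  refine this.congr' ?_
  filter_upwards [hv_top.eventually_gt_atTop 0] with n hn
  field_simp
  ring

end GammaRatioSeq

open GammaRatioSeq

/-- For `α < 1/2`, the explosion coefficient `f_n = a_n²/v_n` satisfies
`n f_n → 1 − 2α`; in particular `f_n → 0`. -/
theorem stmt_10 (α : ℝ) (hα : α ∈ Set.Ioo (-1 : ℝ) (1 / 2)) (a v f : ℕ → ℝ)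
    (ha : ∀ n, a n = Real.Gamma n * Real.Gamma (α + 1) / Real.Gamma ((n : ℝ) + α))
    (hv : ∀ n, v n = ∑ k ∈ Finset.Icc 1 n, a k ^ 2)
    (hf : ∀ n, f n = a n ^ 2 / v n) :
    Tendsto (fun n : ℕ => (n : ℝ) * f n) atTop (nhds (1 - 2 * α)) ∧
      Tendsto f atTop (nhds 0) := by
  obtain ⟨hα_gt, hα_lt⟩ := hα
  have hn_pos : ∀ᶠ n : ℕ in atTop, 0 < (n : ℝ) ∧ 0 < (n : ℝ) + α := by
    filter_upwards [eventually_ge_atTop 1] with n hn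
    have : (1 : ℝ) ≤ n := by exact_mod_cast hn
    constructor <;> linarith
  have hrec : ∀ᶠ n : ℕ in atTop, a (n + 1) * (n + α) = a n * n := by
    filter_upwards [hn_pos] with n ⟨hn, hnα⟩
    have := Real.Gamma_add_one_div_Gamma_add_add_one_mul hn.ne' hnα.ne'
    rw [ha, ha]
    push_cast
    rw [add_right_comm]
    linear_combination Real.Gamma (α + 1) * this
  have ha_ne : ∀ᶠ n in atTop, a n ≠ 0 := by
    filter_upwards [hn_pos] with n ⟨hn, hnα⟩
    have := Real.Gamma_pos_of_pos hn
    have := Real.Gamma_pos_of_pos hnα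
    have := Real.Gamma_pos_of_pos (show 0 < α + 1 by linarith)
    rw [ha]
    positivity
  have hnf : Tendsto (fun n : ℕ => (n : ℝ) * f n) atTop (𝓝 (1 - 2 * α)) := by
    simpa only [hf, hv, mul_div_assoc] using tendsto_mul_sq_div_sum_sq hα_lt hrec ha_ne
  refine ⟨hnf, (hnf.div_atTop tendsto_natCast_atTop_atTop).congr' ?_⟩
  filter_upwards [eventually_ne_atTop 0] with n hn
  field_simp
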